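/- Let n ≥ 1 be an integer, let i ∈ Z/2Z and j ∈ {1,…,n}, and let x be any vertex of the burnt pancake graph P_2(n) lying in V_{i,j}. Then for every i′ ∈ Z/2Z and j′ ∈ {1,…,n}, the number of neighbours of x in V_{i′,j′} equals: j − 1 if (i′, j′) = (i, j); 1 if i′ = i + 1 (mod 2) and j + j′ ≤ n + 1; and 0 otherwise. In particular, the partition {V_{i,j}} of the vertex set of P_2(n) is equitable with quotient matrix the 2n × 2n block matrix circ(D_n, E_n) = [[D_n, E_n],[E_n, D_n]]. -/

import Mathlib

open Polynomial

/-- An `m`-coloured permutation of `{1, …, n}`: a pair `(χ, ψ)` of a colour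
function `χ : [n] → ℤ/mℤ` and a permutation `ψ` of `[n]` (positions and letters
are 0-indexed, so the letter `1` of the paper corresponds to `0 : Fin n`). -/
abbrev ColouredPerm (m n : ℕ) := (Fin n → ZMod m) × Equiv.Perm (Fin n)

/-- The map on positions underlying reversal of the prefix of length `k`
(for `1 ≤ k ≤ n`; it is the identity outside this range of `k`). -/
def flipFun (n k : ℕ) : Fin n → Fin n := fun t =>
  if h : t.val < k ∧ k ≤ n then ⟨k - 1 - t.val, by omega⟩ else t

theorem flipFun_involutive (n k : ℕ) : Function.Involutive (flipFun n k) := by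
  intro t
  unfold flipFun
  by_cases h : t.val < k ∧ k ≤ n
  · rw [dif_pos h, dif_pos (by simp only [Fin.val_mk]; omega)]
    apply Fin.ext
    simp only [Fin.val_mk]
    omega
  · rw [dif_neg h, dif_neg h]

/-- Reversal of the prefix of length `k`, as a permutation of positions. -/
def flipPerm (n k : ℕ) : Equiv.Perm (Fin n) := (flipFun_involutive n k).toPerm

/-- The prefix reversal `r_k^ε` acting on `m`-coloured permutations: it
reverses the prefix of length `k` and adds `ε` to the colours in that prefix. -/
def prefixRev (m n : ℕ) (k : ℕ) (ε : ZMod m) (σ : ColouredPerm m n) :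
    ColouredPerm m n :=
  (fun t => if t.val < k then σ.1 (flipPerm n k t) + ε else σ.1 t,
   σ.2 * flipPerm n k)

/-- Adjacency in the generalised pancake graph: two distinct coloured
permutations are adjacent iff one is obtained from the other by a prefix
reversal `r_k^ε` with `1 ≤ k ≤ n` and `ε ∈ {+1, -1}`. -/
def pancakeAdj (m n : ℕ) (σ τ : ColouredPerm m n) : Prop :=
  σ ≠ τ ∧ ∃ k, 1 ≤ k ∧ k ≤ n ∧ ∃ ε : ZMod m, (ε = 1 ∨ ε = -1) ∧
    (τ = prefixRev m n k ε σ ∨ σ = prefixRev m n k ε τ)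

/-- The generalised pancake graph `𝒫_m(n)`. -/
def pancakeGraph (m n : ℕ) : SimpleGraph (ColouredPerm m n) where
  Adj := pancakeAdj m n
  symm := by
    constructor
    rintro a b ⟨hab, k, hk1, hk2, ε, hε, h⟩
    exact ⟨hab.symm, k, hk1, hk2, ε, hε, h.symm⟩
  loopless := by constructor; rintro a ⟨h, -⟩; exact h rfl

open Classical in
/-- The (real) adjacency matrix of the generalised pancake graph `𝒫_m(n)`. -/
noncomputable def pancakeAdjMatrix (m n : ℕ) :
    Matrix (ColouredPerm m n) (ColouredPerm m n) ℝ :=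
  Matrix.of fun σ τ => if pancakeAdj m n σ τ then 1 else 0

/-- The `i`-th largest eigenvalue (`i = 1, 2, …`) of a real matrix `M`,
i.e. the `i`-th largest root of its characteristic polynomial, counted
with multiplicity (junk value `0` if there are fewer than `i` real roots). -/
noncomputable def nthLargestEig {V : Type*} [Fintype V] [DecidableEq V]
    (M : Matrix V V ℝ) (i : ℕ) : ℝ :=
  ((M.charpoly.roots.sort (· ≤ ·)).reverse).getD (i - 1) 0

/-- The diagonal matrix `D_n = diag(0, 1, …, n-1)`. -/
noncomputable def Dmat (n : ℕ) : Matrix (Fin n) (Fin n) ℝ :=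
  Matrix.diagonal fun j => (j.val : ℝ)

/-- The 0/1 matrix `E_n`, whose `(i, j)` entry (1-indexed) is `1` iff
`i + j ≤ n + 1`. -/
noncomputable def Emat (n : ℕ) : Matrix (Fin n) (Fin n) ℝ :=
  Matrix.of fun j j' => if (j.val + 1) + (j'.val + 1) ≤ n + 1 then 1 else 0

/-- The `mn × mn` block circulant matrix `circ(B_0, …, B_{m-1})` whose
`(r, s)` block is `B_{s - r mod m}`. -/
def blockCirc (m n : ℕ) (B : ZMod m → Matrix (Fin n) (Fin n) ℝ) :
    Matrix (ZMod m × Fin n) (ZMod m × Fin n) ℝ :=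
  Matrix.of fun p q => B (q.1 - p.1) p.2 q.2

/-- The part `V_{i,j}` of the vertex set of `𝒫_m(n)`: those coloured
permutations in which the letter `1` (here `0 : Fin n`) occupies position `j`
with colour `i`. -/
def Vpart (m n : ℕ) (i : ZMod m) (j : Fin n) : Set (ColouredPerm m n) :=
  {σ | σ.2 j = ⟨0, j.pos⟩ ∧ σ.1 j = i}

/-! In the burnt pancake graph `r_k^+ = r_k^-` is an involution, so the neighbours of `x` are
exactly the `n` distinct vertices `r_k x`, `1 ≤ k ≤ n`. If the letter `1` sits at position `j` of
`x` (1-indexed), then `r_k` leaves it in place for `k < j`, and for `k ≥ j` moves it to position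
`k + 1 - j` with the other colour. So `j - 1` neighbours stay in `V_{i,j}`, exactly one
(`k = j + j' - 1`) lies in `V_{i+1,j'}` when `j + j' ≤ n + 1`, and no other part is reached. -/

section

open Finset

variable {m n k : ℕ}

theorem flipPerm_apply_of_lt (hk : k ≤ n) {t : Fin n} (ht : t.val < k) :
    flipPerm n k t = ⟨k - 1 - t.val, by omega⟩ :=
  dif_pos ⟨ht, hk⟩

theorem flipPerm_apply_of_le {t : Fin n} (ht : k ≤ t.val) : flipPerm n k t = t :=
  dif_neg fun h => by omega

theorem flipPerm_flipPerm (t : Fin n) : flipPerm n k (flipPerm n k t) = t :=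
  flipFun_involutive n k t

theorem flipPerm_val_lt_iff (t : Fin n) : (flipPerm n k t).val < k ↔ t.val < k := by
  by_cases hk : k ≤ n
  · rcases lt_or_ge t.val k with ht | ht
    · simp only [flipPerm_apply_of_lt hk ht, ht, iff_true]; omega
    · simp only [flipPerm_apply_of_le ht]
  · rw [show flipPerm n k t = t from dif_neg fun h => hk h.2]

theorem flipPerm_eq_iff (hk : k ≤ n) (t s : Fin n) :
    flipPerm n k t = s ↔ (k ≤ t.val ∧ t = s) ∨ (s.val + t.val + 1 = k) := by
  rcases lt_or_ge t.val k with ht | ht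
  · rw [flipPerm_apply_of_lt hk ht, Fin.ext_iff, Fin.val_mk]
    omega
  · rw [flipPerm_apply_of_le ht, Fin.ext_iff]
    omega

theorem prefixRev_fst_apply (ε : ZMod m) (σ : ColouredPerm m n) (t : Fin n) :
    (prefixRev m n k ε σ).1 t = if t.val < k then σ.1 (flipPerm n k t) + ε else σ.1 t :=
  rfl

theorem prefixRev_snd_apply (ε : ZMod m) (σ : ColouredPerm m n) (t : Fin n) :
    (prefixRev m n k ε σ).2 t = σ.2 (flipPerm n k t) :=
  rfl

theorem prefixRev_neg_prefixRev (ε : ZMod m) (σ : ColouredPerm m n) :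
    prefixRev m n k (-ε) (prefixRev m n k ε σ) = σ := by
  refine Prod.ext (funext fun t => ?_) (Equiv.ext fun t => ?_)
  · by_cases ht : t.val < k
    · simp [prefixRev_fst_apply, ht, flipPerm_val_lt_iff, flipPerm_flipPerm]
    · simp [prefixRev_fst_apply, ht]
  · simp [prefixRev_snd_apply, flipPerm_flipPerm]

theorem prefixRev_snd_apply_zero (hk : k ∈ Set.Icc 1 n) (ε : ZMod m) (σ : ColouredPerm m n) :
    (prefixRev m n k ε σ).2 ⟨0, by grind⟩ = σ.2 ⟨k - 1, by grind⟩ := by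
  rw [prefixRev_snd_apply, flipPerm_apply_of_lt hk.2 (by grind)]
  rfl

theorem prefixRev_injOn (ε : ZMod m) (σ : ColouredPerm m n) :
    Set.InjOn (fun k => prefixRev m n k ε σ) (Set.Icc 1 n) := by
  intro a ha b hb hab
  have h := congrArg (fun τ : ColouredPerm m n => τ.2 ⟨0, by grind⟩) hab
  simp only [prefixRev_snd_apply_zero ha, prefixRev_snd_apply_zero hb, σ.2.injective.eq_iff,
    Fin.mk.injEq] at h
  grind

theorem prefixRev_ne_self (hk : k ∈ Set.Icc 1 n) {ε : ZMod m} (hε : ε ≠ 0)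
    (σ : ColouredPerm m n) : prefixRev m n k ε σ ≠ σ := by
  intro h
  obtain rfl | hk2 := eq_or_lt_of_le hk.1
  · have h0 := congrFun (congrArg Prod.fst h) ⟨0, by grind⟩
    rw [prefixRev_fst_apply, if_pos Nat.one_pos, flipPerm_apply_of_lt hk.2 Nat.one_pos] at h0
    exact hε (add_eq_left.mp h0)
  · have h0 := congrArg (fun τ : ColouredPerm m n => τ.2 ⟨0, by grind⟩) h
    simp only [prefixRev_snd_apply_zero hk, σ.2.injective.eq_iff, Fin.mk.injEq] at h0
    omega

theorem prefixRev_mem_Vpart_iff {i : ZMod m} {j : Fin n} {x : ColouredPerm m n}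
    (hx : x ∈ Vpart m n i j) (hk : k ≤ n) (ε i' : ZMod m) (j' : Fin n) :
    prefixRev m n k ε x ∈ Vpart m n i' j' ↔
      (k ≤ j.val ∧ j' = j ∧ i' = i) ∨ (j.val + j'.val + 1 = k ∧ i' = i + ε) := by
  have hletter : (prefixRev m n k ε x).2 j' = ⟨0, j'.pos⟩ ↔ flipPerm n k j' = j := by
    rw [prefixRev_snd_apply, ← hx.1, x.2.injective.eq_iff]
  simp only [Vpart, Set.mem_ofPred_eq, hletter, flipPerm_eq_iff hk, prefixRev_fst_apply]
  constructor
  · rintro ⟨⟨hkj, rfl⟩ | hsum, hcol⟩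
    · rw [if_neg (by omega), hx.2] at hcol
      exact Or.inl ⟨hkj, rfl, hcol.symm⟩
    · rw [if_pos (by omega), (flipPerm_eq_iff hk j' j).2 (Or.inr hsum), hx.2] at hcol
      exact Or.inr ⟨hsum, hcol.symm⟩
  · rintro (⟨hkj, rfl, rfl⟩ | ⟨hsum, rfl⟩)
    · exact ⟨Or.inl ⟨hkj, rfl⟩, by rw [if_neg (by omega), hx.2]⟩
    · refine ⟨Or.inr hsum, ?_⟩
      rw [if_pos (by omega), (flipPerm_eq_iff hk j' j).2 (Or.inr hsum), hx.2]

open Classical in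
theorem card_filter_prefixRev_mem_Vpart {i : ZMod m} {j : Fin n} {x : ColouredPerm m n}
    (hx : x ∈ Vpart m n i j) (ε i' : ZMod m) (j' : Fin n) :
    #{k ∈ Icc 1 n | prefixRev m n k ε x ∈ Vpart m n i' j'} =
      (if j' = j ∧ i' = i then j.val else 0) +
        (if i' = i + ε ∧ j.val + j'.val + 1 ≤ n then 1 else 0) := by
  rw [filter_congr fun k hk => prefixRev_mem_Vpart_iff hx (mem_Icc.1 hk).2 ε i' j', filter_or,
    card_union_of_disjoint (disjoint_filter.2 fun k _ h₁ h₂ => by omega)]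
  congr 1
  · split_ifs with h
    · calc _ = #(Icc 1 j.val) := by
            congr 1
            ext k
            simp only [mem_filter, mem_Icc, h, and_true]
            omega
        _ = j.val := by simp
    · exact card_eq_zero.2 (filter_eq_empty_iff.2 fun k _ hk => h hk.2)
  · split_ifs with h
    · refine card_eq_one.2 ⟨j.val + j'.val + 1, ?_⟩
      ext k
      simp only [mem_filter, mem_Icc, h, and_true, mem_singleton]
      omega
    · refine card_eq_zero.2 (filter_eq_empty_iff.2 fun k hk hk' => h ⟨hk'.2, ?_⟩)
      have := (mem_Icc.1 hk).2
      omega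

theorem prefixRev_two_involutive (ε : ZMod 2) : Function.Involutive (prefixRev 2 n k ε) :=
  fun σ => by simpa only [ZMod.neg_eq_self_mod_two] using prefixRev_neg_prefixRev (k := k) ε σ

theorem pancakeGraph_two_adj_iff {x y : ColouredPerm 2 n} :
    (pancakeGraph 2 n).Adj x y ↔ ∃ k ∈ Set.Icc 1 n, prefixRev 2 n k 1 x = y := by
  constructor
  · rintro ⟨-, k, hk1, hkn, ε, hε, h⟩
    obtain rfl : ε = 1 := hε.elim id fun h => h.trans (ZMod.neg_eq_self_mod_two 1)
    refine ⟨k, ⟨hk1, hkn⟩, ?_⟩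
    rcases h with rfl | rfl
    · rfl
    · exact prefixRev_two_involutive 1 y
  · rintro ⟨k, hk, rfl⟩
    exact ⟨(prefixRev_ne_self hk one_ne_zero x).symm, k, hk.1, hk.2, 1, Or.inl rfl, Or.inl rfl⟩

open Classical in
theorem ncard_pancakeGraph_two_adj_mem (x : ColouredPerm 2 n) (S : Set (ColouredPerm 2 n)) :
    {y | (pancakeGraph 2 n).Adj x y ∧ y ∈ S}.ncard =
      #{k ∈ Icc 1 n | prefixRev 2 n k 1 x ∈ S} := by
  have himage : {y | (pancakeGraph 2 n).Adj x y ∧ y ∈ S} =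
      (fun k => prefixRev 2 n k 1 x) '' ↑{k ∈ Icc 1 n | prefixRev 2 n k 1 x ∈ S} := by
    ext y
    simp only [pancakeGraph_two_adj_iff, Set.mem_ofPred_eq, Set.mem_image, coe_filter,
      Set.mem_Icc]
    grind
  rw [himage, ((prefixRev_injOn 1 x).mono fun k hk => by simp_all).ncard_image,
    Set.ncard_coe_finset]

theorem ncard_pancakeGraph_two_adj_mem_Vpart {i : ZMod 2} {j : Fin n} {x : ColouredPerm 2 n}
    (hx : x ∈ Vpart 2 n i j) (i' : ZMod 2) (j' : Fin n) :
    {y | (pancakeGraph 2 n).Adj x y ∧ y ∈ Vpart 2 n i' j'}.ncard =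
      if i' = i ∧ j' = j then j.val
      else if i' = i + 1 ∧ (j.val + 1) + (j'.val + 1) ≤ n + 1 then 1 else 0 := by
  have hi : i + 1 ≠ i := add_ne_left.2 one_ne_zero
  rw [ncard_pancakeGraph_two_adj_mem, card_filter_prefixRev_mem_Vpart hx]
  split_ifs <;> grind

theorem blockCirc_Dmat_Emat_apply (i i' : ZMod 2) (j j' : Fin n) :
    blockCirc 2 n (fun c => if c = 0 then Dmat n else Emat n) (i, j) (i', j') =
      ((if i' = i ∧ j' = j then j.val
        else if i' = i + 1 ∧ (j.val + 1) + (j'.val + 1) ≤ n + 1 then 1 else 0 : ℕ) : ℝ) := by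
  by_cases hii : i' = i
  · subst hii
    simp [blockCirc, Dmat, Matrix.diagonal_apply, eq_comm]
  · have hi' : i' = i + 1 := by revert i i'; decide
    simp [blockCirc, Emat, sub_eq_zero, hi']

end

theorem burnt_pancake_partition_equitable_general (n : ℕ)
    (i : ZMod 2) (j : Fin n) (x : ColouredPerm 2 n) (hx : x ∈ Vpart 2 n i j)
    (i' : ZMod 2) (j' : Fin n) :
    {y | (pancakeGraph 2 n).Adj x y ∧ y ∈ Vpart 2 n i' j'}.ncard =
      (if i' = i ∧ j' = j then j.val
       else if i' = i + 1 ∧ (j.val + 1) + (j'.val + 1) ≤ n + 1 then 1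
       else 0) ∧
    ({y | (pancakeGraph 2 n).Adj x y ∧ y ∈ Vpart 2 n i' j'}.ncard : ℝ) =
      blockCirc 2 n (fun c => if c = 0 then Dmat n else Emat n) (i, j) (i', j') := by
  have hcount := ncard_pancakeGraph_two_adj_mem_Vpart hx i' j'
  exact ⟨hcount, by rw [hcount, blockCirc_Dmat_Emat_apply]⟩

/-- For `n ≥ 1`, any vertex `x ∈ V_{i,j}` of the burnt pancake
graph `𝒫_2(n)`, and any `(i', j')`: the number of neighbours of `x` in
`V_{i',j'}` is `j − 1` if `(i',j') = (i,j)`, is `1` if `i' = i + 1 (mod 2)` and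
`j + j' ≤ n + 1`, and is `0` otherwise (positions `j, j'` are 1-indexed in the
paper, so `j − 1` here is `j.val`).  In particular the partition `{V_{i,j}}` is
equitable with quotient matrix `circ(Dₙ, Eₙ) = [[Dₙ, Eₙ], [Eₙ, Dₙ]]`. -/
theorem burnt_pancake_partition_equitable (n : ℕ) (hn : 1 ≤ n)
    (i : ZMod 2) (j : Fin n) (x : ColouredPerm 2 n) (hx : x ∈ Vpart 2 n i j)
    (i' : ZMod 2) (j' : Fin n) :
    {y | (pancakeGraph 2 n).Adj x y ∧ y ∈ Vpart 2 n i' j'}.ncard =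
      (if i' = i ∧ j' = j then j.val
       else if i' = i + 1 ∧ (j.val + 1) + (j'.val + 1) ≤ n + 1 then 1
       else 0) ∧
    ({y | (pancakeGraph 2 n).Adj x y ∧ y ∈ Vpart 2 n i' j'}.ncard : ℝ) =
      blockCirc 2 n (fun c => if c = 0 then Dmat n else Emat n) (i, j) (i', j') :=
  burnt_pancake_partition_equitable_general n i j x hx i' j'
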